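/- arXiv:1909.03725 — 3 statements merged into one kernel-verified Lean document; each statement's English description precedes it below -/
import Mathlib

section
/- Let x = (x₁,…,x_d) and x' = (x'₁,…,x'_d) be elements of ℝ^d with d ≥ 2. If x ≼icx x' in empirical increasing convex order, then (1/d) Σᵢ xᵢ + ((d−1)/(2(d+1)))·g(x) ≤ (1/d) Σᵢ x'ᵢ + ((d−1)/(2(d+1)))·g(x'), where g is the Gini mean difference. -/
/-- Empirical increasing convex order. -/
def EmpIcxOrd {d : ℕ} (x x' : Fin d → ℝ) : Prop :=
  ∀ φ : ℝ → ℝ, Monotone φ → ConvexOn ℝ Set.univ φ →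
    (d : ℝ)⁻¹ * ∑ i, φ (x i) ≤ (d : ℝ)⁻¹ * ∑ i, φ (x' i)

/-- The Gini mean difference `g(x) = (1/(d(d−1))) Σ_{i,j} |xᵢ − xⱼ|`. -/
noncomputable def gini {d : ℕ} (x : Fin d → ℝ) : ℝ :=
  ((d : ℝ) * ((d : ℝ) - 1))⁻¹ * ∑ i, ∑ j, |x i - x j|

open Finset

private lemma phiMono (t : ℝ) : Monotone (fun u : ℝ => max (u - t) 0) :=
  fun a b hab => max_le_max (by linarith) le_rfl

private lemma phiConvex (t : ℝ) : ConvexOn ℝ Set.univ (fun u : ℝ => max (u - t) 0) := by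
  have h1 : ConvexOn ℝ Set.univ (fun u : ℝ => u - t) :=
    (convexOn_id convex_univ).sub (concaveOn_const t convex_univ)
  exact h1.sup (convexOn_const 0 convex_univ)

/-- Monotonicity of top-segment sums of the sorted tuples under the empirical
increasing convex order. -/
private lemma topSum_mono {d : ℕ} (hd0 : 0 < d) (x x' : Fin d → ℝ) (h : EmpIcxOrd x x')
    (m : ℕ) :
    ∑ i ∈ univ.filter (fun i : Fin d => m ≤ (i : ℕ)), (x ∘ Tuple.sort x) i ≤
      ∑ i ∈ univ.filter (fun i : Fin d => m ≤ (i : ℕ)), (x' ∘ Tuple.sort x') i := by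
  by_cases hm : m < d
  · set y := x ∘ Tuple.sort x with hy
    set y' := x' ∘ Tuple.sort x' with hy'
    set t := y' ⟨m, hm⟩ with ht
    set s := univ.filter (fun i : Fin d => m ≤ (i : ℕ)) with hs
    have hdpos : (0:ℝ) < (d : ℝ)⁻¹ := by positivity
    have hsum : ∑ i, max (x i - t) 0 ≤ ∑ i, max (x' i - t) 0 :=
      le_of_mul_le_mul_left (h (fun u => max (u - t) 0) (phiMono t) (phiConvex t)) hdpos
    have hyx : ∑ i, max (y i - t) 0 = ∑ i, max (x i - t) 0 :=
      Equiv.sum_comp (Tuple.sort x) (fun j => max (x j - t) 0)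
    have hyx' : ∑ i, max (y' i - t) 0 = ∑ i, max (x' i - t) 0 :=
      Equiv.sum_comp (Tuple.sort x') (fun j => max (x' j - t) 0)
    have hmono' : Monotone y' := Tuple.monotone_sort x'
    have hsplit : ∑ i, max (y' i - t) 0 = ∑ i ∈ s, (y' i - t) := by
      rw [← Finset.sum_filter_add_sum_filter_not univ (fun i : Fin d => m ≤ (i : ℕ))
        (fun i => max (y' i - t) 0), ← hs]
      have h1 : ∑ i ∈ s, max (y' i - t) 0 = ∑ i ∈ s, (y' i - t) := by
        refine Finset.sum_congr rfl fun i hi => ?_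
        have hmi : m ≤ (i : ℕ) := (Finset.mem_filter.mp hi).2
        have : t ≤ y' i := hmono' (Fin.le_def.mpr hmi)
        exact max_eq_left (by linarith)
      have h2 : ∑ i ∈ univ.filter (fun i : Fin d => ¬ m ≤ (i : ℕ)),
          max (y' i - t) 0 = 0 := by
        refine Finset.sum_eq_zero fun i hi => ?_
        have hmi : (i : ℕ) ≤ m := le_of_lt (Nat.lt_of_not_le (Finset.mem_filter.mp hi).2)
        have : y' i ≤ t := hmono' (Fin.le_def.mpr hmi)
        exact max_eq_right (by linarith)
      rw [h1, h2, add_zero]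
    calc ∑ i ∈ s, y i ≤ ∑ i ∈ s, (t + max (y i - t) 0) := by
          refine Finset.sum_le_sum fun i _ => ?_
          have := le_max_left (y i - t) (0:ℝ); linarith
      _ = (s.card : ℝ) * t + ∑ i ∈ s, max (y i - t) 0 := by
          rw [Finset.sum_add_distrib, Finset.sum_const, nsmul_eq_mul]
      _ ≤ (s.card : ℝ) * t + ∑ i, max (y i - t) 0 := by
          have hsub : ∑ i ∈ s, max (y i - t) 0 ≤ ∑ i, max (y i - t) 0 :=
            Finset.sum_le_sum_of_subset_of_nonneg (Finset.filter_subset _ _)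
              (fun i _ _ => le_max_right _ _)
          linarith
      _ ≤ (s.card : ℝ) * t + ∑ i, max (y' i - t) 0 := by
          rw [hyx, hyx']; linarith
      _ = (s.card : ℝ) * t + ∑ i ∈ s, (y' i - t) := by rw [hsplit]
      _ = ∑ i ∈ s, y' i := by
          rw [Finset.sum_sub_distrib, Finset.sum_const, nsmul_eq_mul]; ring
  · have hempty : univ.filter (fun i : Fin d => m ≤ (i : ℕ)) = ∅ := by
      refine Finset.filter_false_of_mem fun i _ => ?_
      exact Nat.not_le.mpr (lt_of_lt_of_le i.isLt (Nat.le_of_not_lt hm))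
    simp [hempty]

private lemma max_count {d : ℕ} {y : Fin d → ℝ} (hmono : Monotone y) :
    ∑ i : Fin d, ∑ j : Fin d, max (y i) (y j) = ∑ i : Fin d, (2 * ((i : ℕ) : ℝ) + 1) * y i := by
  have h1 : ∀ i j : Fin d, max (y i) (y j) =
      (if (j : ℕ) ≤ (i : ℕ) then y i else 0) +
      (if (j : ℕ) ≤ (i : ℕ) then 0 else y j) := by
    intro i j
    split
    · next hji => rw [add_zero]; exact max_eq_left (hmono (Fin.le_def.mpr hji))
    · next hji =>
        rw [zero_add]
        exact max_eq_right (hmono (Fin.le_def.mpr (le_of_lt (Nat.lt_of_not_le hji))))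
  have hA : ∀ i : Fin d, ∑ j : Fin d, (if (j : ℕ) ≤ (i : ℕ) then y i else 0) =
      (((i : ℕ) : ℝ) + 1) * y i := by
    intro i
    rw [← Finset.sum_filter]
    have : univ.filter (fun j : Fin d => (j : ℕ) ≤ (i : ℕ)) = Finset.Iic i := by
      ext j
      simp only [Finset.mem_filter, Finset.mem_univ, true_and, Finset.mem_Iic, Fin.le_def]
    rw [this, Finset.sum_const, Fin.card_Iic, nsmul_eq_mul]
    push_cast; ring
  have hB : ∑ i : Fin d, ∑ j : Fin d, (if (j : ℕ) ≤ (i : ℕ) then 0 else y j) =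
      ∑ j : Fin d, ((j : ℕ) : ℝ) * y j := by
    rw [Finset.sum_comm]
    refine Finset.sum_congr rfl fun j _ => ?_
    have hswap : ∀ i : Fin d, (if (j : ℕ) ≤ (i : ℕ) then (0:ℝ) else y j) =
        (if ¬ (j : ℕ) ≤ (i : ℕ) then y j else 0) := by
      intro i; by_cases hc : (j : ℕ) ≤ (i : ℕ) <;> simp [hc]
    simp_rw [hswap]
    rw [← Finset.sum_filter]
    have : univ.filter (fun i : Fin d => ¬ (j : ℕ) ≤ (i : ℕ)) = Finset.Iio j := by
      ext i
      simp only [Finset.mem_filter, Finset.mem_univ, true_and, Finset.mem_Iio, Fin.lt_def, not_le]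
    rw [this, Finset.sum_const, Fin.card_Iio, nsmul_eq_mul]
  calc ∑ i : Fin d, ∑ j : Fin d, max (y i) (y j)
      = ∑ i : Fin d, ((∑ j : Fin d, (if (j : ℕ) ≤ (i : ℕ) then y i else 0)) +
          ∑ j : Fin d, (if (j : ℕ) ≤ (i : ℕ) then 0 else y j)) := by
        refine Finset.sum_congr rfl fun i _ => ?_
        rw [← Finset.sum_add_distrib]
        exact Finset.sum_congr rfl fun j _ => h1 i j
    _ = ∑ i : Fin d, (((i : ℕ) : ℝ) + 1) * y i +
          ∑ j : Fin d, ((j : ℕ) : ℝ) * y j := by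
        rw [Finset.sum_add_distrib, hB]
        congr 1
        exact Finset.sum_congr rfl fun i _ => hA i
    _ = ∑ i : Fin d, (2 * ((i : ℕ) : ℝ) + 1) * y i := by
        rw [← Finset.sum_add_distrib]
        exact Finset.sum_congr rfl fun i _ => by ring

/-- Representation of mean plus scaled Gini as a positive multiple of the sum of
top-segment sums of the sorted tuple. -/
private lemma lhs_eq {d : ℕ} (hd : 2 ≤ d) (x : Fin d → ℝ) :
    (d : ℝ)⁻¹ * ∑ i, x i + (((d : ℝ) - 1) / (2 * ((d : ℝ) + 1))) * gini x =
      (2 / ((d : ℝ) * ((d : ℝ) + 1))) * ∑ m ∈ Finset.range d,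
        ∑ i ∈ univ.filter (fun i : Fin d => m ≤ (i : ℕ)), (x ∘ Tuple.sort x) i := by
  set y := x ∘ Tuple.sort x with hy
  have hmono : Monotone y := Tuple.monotone_sort x
  have hd0 : ((d : ℝ)) ≠ 0 := by positivity
  have hd1 : ((d : ℝ)) - 1 ≠ 0 := by
    have : (2 : ℝ) ≤ (d : ℝ) := by exact_mod_cast hd
    intro hc; linarith
  have hdp1 : ((d : ℝ)) + 1 ≠ 0 := by positivity
  have hS : ∑ i, x i = ∑ i : Fin d, y i := (Equiv.sum_comp (Tuple.sort x) x).symm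
  have hA : ∑ i, ∑ j, |x i - x j| = ∑ i : Fin d, ∑ j : Fin d, |y i - y j| := by
    calc ∑ i, ∑ j, |x i - x j|
        = ∑ i, ∑ j, |x i - y j| := by
          refine Finset.sum_congr rfl fun i _ => ?_
          exact (Equiv.sum_comp (Tuple.sort x) (fun j => |x i - x j|)).symm
      _ = ∑ i : Fin d, ∑ j : Fin d, |y i - y j| :=
          (Equiv.sum_comp (Tuple.sort x) (fun i => ∑ j, |x i - y j|)).symm
  have habs : ∑ i : Fin d, ∑ j : Fin d, |y i - y j| =
      2 * (∑ i : Fin d, (2 * ((i : ℕ) : ℝ) + 1) * y i) - 2 * (d : ℝ) * ∑ i : Fin d, y i := by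
    have h1 : ∀ i j : Fin d, |y i - y j| = 2 * max (y i) (y j) - y i - y j := by
      intro i j
      rcases le_total (y i) (y j) with hij | hij
      · rw [abs_of_nonpos (by linarith), max_eq_right hij]; ring
      · rw [abs_of_nonneg (by linarith), max_eq_left hij]; ring
    calc ∑ i : Fin d, ∑ j : Fin d, |y i - y j|
        = ∑ i, ∑ j, (2 * max (y i) (y j) - y i - y j) := by
          exact Finset.sum_congr rfl fun i _ => Finset.sum_congr rfl fun j _ => h1 i j
      _ = ∑ i : Fin d, (2 * (∑ j : Fin d, max (y i) (y j)) - (d : ℝ) * y i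
            - ∑ j : Fin d, y j) := by
          refine Finset.sum_congr rfl fun i _ => ?_
          rw [Finset.sum_sub_distrib, Finset.sum_sub_distrib, ← Finset.mul_sum,
            Finset.sum_const, Finset.card_univ, Fintype.card_fin, nsmul_eq_mul]
      _ = 2 * (∑ i : Fin d, ∑ j : Fin d, max (y i) (y j)) - (d : ℝ) * ∑ i : Fin d, y i
            - (d : ℝ) * ∑ i : Fin d, y i := by
          rw [Finset.sum_sub_distrib, Finset.sum_sub_distrib, ← Finset.mul_sum,
            ← Finset.mul_sum, Finset.sum_const, Finset.card_univ, Fintype.card_fin,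
            nsmul_eq_mul]
      _ = 2 * (∑ i : Fin d, (2 * ((i : ℕ) : ℝ) + 1) * y i) - 2 * (d : ℝ) * ∑ i : Fin d, y i := by
          rw [max_count hmono]; ring
  have hT : ∑ m ∈ Finset.range d,
      ∑ i ∈ univ.filter (fun i : Fin d => m ≤ (i : ℕ)), y i =
      ∑ i : Fin d, (((i : ℕ) : ℝ) + 1) * y i := by
    calc ∑ m ∈ Finset.range d, ∑ i ∈ univ.filter (fun i : Fin d => m ≤ (i : ℕ)), y i
        = ∑ m ∈ Finset.range d, ∑ i : Fin d, (if m ≤ (i : ℕ) then y i else 0) := by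
          refine Finset.sum_congr rfl fun m _ => ?_
          rw [Finset.sum_filter]
      _ = ∑ i : Fin d, ∑ m ∈ Finset.range d, (if m ≤ (i : ℕ) then y i else 0) :=
          Finset.sum_comm
      _ = ∑ i : Fin d, (((i : ℕ) : ℝ) + 1) * y i := by
          refine Finset.sum_congr rfl fun i _ => ?_
          rw [← Finset.sum_filter]
          have : (Finset.range d).filter (fun m => m ≤ (i : ℕ)) =
              Finset.range ((i : ℕ) + 1) := by
            ext m
            simp only [Finset.mem_filter, Finset.mem_range]
            have := i.isLt
            omega
          rw [this, Finset.sum_const, Finset.card_range, nsmul_eq_mul]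
          push_cast; ring
  have hMT : ∑ i : Fin d, (((i : ℕ) : ℝ) + 1) * y i =
      ((∑ i : Fin d, (2 * ((i : ℕ) : ℝ) + 1) * y i) + ∑ i : Fin d, y i) / 2 := by
    rw [← Finset.sum_add_distrib, eq_div_iff (by norm_num : (2:ℝ) ≠ 0), Finset.sum_mul]
    exact Finset.sum_congr rfl fun i _ => by ring
  simp only [gini]
  rw [hS, hA, habs, hT, hMT]
  set M := ∑ i : Fin d, (2 * ((i : ℕ) : ℝ) + 1) * y i
  set S := ∑ i : Fin d, y i
  field_simp
  ring

/-- If `x ≼icx x'` then the inequality between means plus scaled Gini mean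
differences holds. -/
theorem empIcxOrd_mean_gini_inequality {d : ℕ} (hd : 2 ≤ d) (x x' : Fin d → ℝ)
    (h : EmpIcxOrd x x') :
    (d : ℝ)⁻¹ * ∑ i, x i + (((d : ℝ) - 1) / (2 * ((d : ℝ) + 1))) * gini x ≤
      (d : ℝ)⁻¹ * ∑ i, x' i + (((d : ℝ) - 1) / (2 * ((d : ℝ) + 1))) * gini x' := by
  rw [lhs_eq hd x, lhs_eq hd x']
  have hd0 : 0 < d := by omega
  refine mul_le_mul_of_nonneg_left ?_ (by positivity)
  exact Finset.sum_le_sum fun m _ => topSum_mono hd0 x x' h m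
end

section
/- Let x, x' ∈ ℝ^d. If x ≼icx x' and x' ≼icx x in empirical increasing convex order, then x' is a permutation of x, i.e., there is a permutation π of {1,…,d} with x'ᵢ = x_{π(i)} for all i. Consequently, the relation ≼icx is a partial order (reflexive, transitive, and antisymmetric) on the set ℝ^d_↑ of nondecreasingly sorted vectors in ℝ^d. -/
namespace Multiset

def stopLoss (s : Multiset ℝ) (t : ℝ) : ℝ :=
  (s.map fun a => max (a - t) 0).sum

lemma stopLoss_cons (a : ℝ) (s : Multiset ℝ) (t : ℝ) :
    stopLoss (a ::ₘ s) t = max (a - t) 0 + stopLoss s t := by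
  simp [stopLoss]

lemma stopLoss_eq_zero {s : Multiset ℝ} {t : ℝ} (h : ∀ a ∈ s, a ≤ t) : stopLoss s t = 0 :=
  sum_eq_zero <| by simpa [stopLoss] using h

lemma sub_le_stopLoss {s : Multiset ℝ} {a : ℝ} (ha : a ∈ s) (t : ℝ) : a - t ≤ stopLoss s t :=
  (le_max_left _ _).trans <| single_le_sum (by simp) _ (mem_map_of_mem _ ha)

variable {s s' : Multiset ℝ}

lemma le_of_stopLoss_eq (h : ∀ t, stopLoss s t = stopLoss s' t) {a b : ℝ} (ha : a ∈ s)
    (hb : ∀ c ∈ s', c ≤ b) : a ≤ b := by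
  linarith [sub_le_stopLoss ha b, h b, stopLoss_eq_zero hb]

lemma ne_zero_of_stopLoss_eq (h : ∀ t, stopLoss s t = stopLoss s' t) (hs : s ≠ 0) : s' ≠ 0 := by
  rintro rfl
  obtain ⟨a, ha⟩ := exists_mem_of_ne_zero hs
  linarith [le_of_stopLoss_eq h (b := a - 1) ha (by simp)]

theorem eq_of_stopLoss_eq (h : ∀ t, stopLoss s t = stopLoss s' t) : s = s' := by
  induction hn : card s generalizing s s' with
  | zero =>
    rw [card_eq_zero] at hn
    subst hn
    by_contra hs'
    exact ne_zero_of_stopLoss_eq (fun t => (h t).symm) (Ne.symm hs') rfl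
  | succ n ih =>
    have hs : s ≠ 0 := card_pos.mp (by omega)
    obtain ⟨a, has, hamax⟩ := s.exists_max_image id hs
    obtain ⟨b, hbs', hbmax⟩ := s'.exists_max_image id (ne_zero_of_stopLoss_eq h hs)
    obtain rfl : a = b := le_antisymm (le_of_stopLoss_eq h has hbmax)
      (le_of_stopLoss_eq (fun t => (h t).symm) hbs' hamax)
    rw [← cons_erase has, ← cons_erase hbs']
    refine congrArg _ (ih (fun t => ?_) (by simp [card_erase_of_mem has, hn]))
    have ht := h t
    rwa [← cons_erase has, ← cons_erase hbs', stopLoss_cons, stopLoss_cons, add_right_inj] at ht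

end Multiset

theorem Fin.eq_of_monotone_of_map_univ_val_eq {α : Type*} [PartialOrder α] {n : ℕ}
    {u v : Fin n → α} (hu : Monotone u) (hv : Monotone v)
    (h : Finset.univ.val.map u = Finset.univ.val.map v) : u = v := by
  rw [Fin.univ_val_map, Fin.univ_val_map, Multiset.coe_eq_coe] at h
  exact List.ofFn_injective (h.eq_of_sortedLE hu.sortedLE_ofFn hv.sortedLE_ofFn)

theorem Fin.exists_perm_eq_comp_of_map_univ_val_eq {α : Type*} [LinearOrder α] {n : ℕ}
    {u v : Fin n → α} (h : Finset.univ.val.map u = Finset.univ.val.map v) :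
    ∃ π : Equiv.Perm (Fin n), ∀ i, v i = u (π i) := by
  have hsorted : u ∘ Tuple.sort u = v ∘ Tuple.sort v := by
    refine Fin.eq_of_monotone_of_map_univ_val_eq (Tuple.monotone_sort u)
      (Tuple.monotone_sort v) ?_
    rw [← Multiset.map_map, ← Multiset.map_map, Multiset.map_univ_val_equiv,
      Multiset.map_univ_val_equiv, h]
  refine ⟨(Tuple.sort v).symm.trans (Tuple.sort u), fun i => ?_⟩
  simpa using (congrFun hsorted ((Tuple.sort v).symm i)).symm

namespace EmpIcxOrd

variable {d : ℕ} {x y z : Fin d → ℝ}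

theorem refl (x : Fin d → ℝ) : EmpIcxOrd x x := fun _ _ _ => le_rfl

theorem trans (hxy : EmpIcxOrd x y) (hyz : EmpIcxOrd y z) : EmpIcxOrd x z :=
  fun φ hmono hconv => (hxy φ hmono hconv).trans (hyz φ hmono hconv)

lemma sum_eq_of_antisymm {φ : ℝ → ℝ} (hmono : Monotone φ) (hconv : ConvexOn ℝ Set.univ φ)
    (hxy : EmpIcxOrd x y) (hyx : EmpIcxOrd y x) : ∑ i, φ (x i) = ∑ i, φ (y i) := by
  rcases eq_or_ne d 0 with rfl | hd
  · simp
  · exact mul_left_cancel₀ (by positivity) (le_antisymm (hxy φ hmono hconv) (hyx φ hmono hconv))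

theorem map_univ_val_eq_of_antisymm (hxy : EmpIcxOrd x y) (hyx : EmpIcxOrd y x) :
    Finset.univ.val.map x = Finset.univ.val.map y := by
  refine Multiset.eq_of_stopLoss_eq fun t => ?_
  have hmono : Monotone fun a : ℝ => max (a - t) 0 := fun _ _ hab =>
    max_le_max_right 0 (sub_le_sub_right hab t)
  have hconv : ConvexOn ℝ Set.univ fun a : ℝ => max (a - t) 0 :=
    ((convexOn_id convex_univ).sub (concaveOn_const t convex_univ)).sup
      (convexOn_const 0 convex_univ)
  simpa only [Multiset.stopLoss, Multiset.map_map, Function.comp_def,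
    Finset.sum_eq_multiset_sum] using sum_eq_of_antisymm hmono hconv hxy hyx

end EmpIcxOrd

/-- If `x ≼icx x'` and `x' ≼icx x`, then `x'` is a permutation of `x`.
Consequently, `≼icx` is a partial order (reflexive, transitive, antisymmetric)
on the set of nondecreasingly sorted vectors in `ℝᵈ`. -/
theorem empIcxOrd_antisymm_up_to_permutation {d : ℕ} (x x' : Fin d → ℝ)
    (h1 : EmpIcxOrd x x') (h2 : EmpIcxOrd x' x) :
    (∃ π : Equiv.Perm (Fin d), ∀ i : Fin d, x' i = x (π i)) ∧
    (∀ u : Fin d → ℝ, Monotone u → EmpIcxOrd u u) ∧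
    (∀ u v w : Fin d → ℝ, Monotone u → Monotone v → Monotone w →
      EmpIcxOrd u v → EmpIcxOrd v w → EmpIcxOrd u w) ∧
    (∀ u v : Fin d → ℝ, Monotone u → Monotone v →
      EmpIcxOrd u v → EmpIcxOrd v u → u = v) :=
  ⟨Fin.exists_perm_eq_comp_of_map_univ_val_eq (h1.map_univ_val_eq_of_antisymm h2),
    fun u _ => .refl u,
    fun _ _ _ _ _ _ huv hvw => huv.trans hvw,
    fun _ _ hu hv huv hvu =>
      Fin.eq_of_monotone_of_map_univ_val_eq hu hv (huv.map_univ_val_eq_of_antisymm hvu)⟩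
end

section
/- Let (X, ≼) be a partially ordered set, x₁,…,xₙ ∈ X and y₁,…,yₙ ∈ ℝ. Let 𝒜 be the collection of subsets A ⊆ {1,…,n} such that i ∈ A and xᵢ ≼ xⱼ imply j ∈ A (the admissible upper sets). For each i ∈ {1,…,n} define F̂ᵢ(z) = max over A ∈ 𝒜 with i ∈ A of the min over A' ∈ 𝒜 with A' ⊊ A of (1/#(A∖A')) Σ_{j ∈ A∖A'} 1{yⱼ ≤ z}. Then for every i, the function z ↦ F̂ᵢ(z) is a valid cumulative distribution function: it takes values in [0,1], is nondecreasing, is right-continuous, and satisfies F̂ᵢ(z) → 0 as z → −∞ and F̂ᵢ(z) → 1 as z → +∞. -/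
open Filter

variable {X : Type*} [PartialOrder X] {n : ℕ}

/-- `A ⊆ {1,…,n}` is an admissible upper set for the covariates `x`:
`i ∈ A` and `xᵢ ≼ xⱼ` imply `j ∈ A`. -/
def IsAdmissible (x : Fin n → X) (A : Finset (Fin n)) : Prop :=
  ∀ i ∈ A, ∀ j : Fin n, x i ≤ x j → j ∈ A

open scoped Classical in
/-- The admissible upper sets containing a given index `i`. -/
noncomputable def upperSetsContaining (x : Fin n → X) (i : Fin n) : Finset (Finset (Fin n)) :=
  Finset.univ.filter fun A => IsAdmissible x A ∧ i ∈ A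

open scoped Classical in
/-- The admissible upper sets that are proper subsets of `A`. -/
noncomputable def properUpperSubsets (x : Fin n → X) (A : Finset (Fin n)) :
    Finset (Finset (Fin n)) :=
  Finset.univ.filter fun A' => IsAdmissible x A' ∧ A' ⊂ A

lemma upperSetsContaining_nonempty (x : Fin n → X) (i : Fin n) :
    (upperSetsContaining x i).Nonempty :=
  ⟨Finset.univ, by
    simp only [upperSetsContaining, Finset.mem_filter]; simp [IsAdmissible]⟩

/-- The average `(1/#B) Σ_{j ∈ B} 1{yⱼ ≤ z}`. -/
noncomputable def indicatorAvg (y : Fin n → ℝ) (B : Finset (Fin n)) (z : ℝ) : ℝ :=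
  (∑ j ∈ B, if y j ≤ z then (1 : ℝ) else 0) / (B.card : ℝ)

/-- The max–min formula
`F̂ᵢ(z) = max_{A ∋ i admissible} min_{A' ⊊ A admissible} (1/#(A∖A')) Σ_{j ∈ A∖A'} 1{yⱼ ≤ z}`. -/
noncomputable def Fhat (x : Fin n → X) (y : Fin n → ℝ) (i : Fin n) (z : ℝ) : ℝ :=
  (upperSetsContaining x i).sup' (upperSetsContaining_nonempty x i) fun A =>
    if h : (properUpperSubsets x A).Nonempty then
      (properUpperSubsets x A).inf' h fun A' => indicatorAvg y (A \ A') z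
    else 0

/-!
`F̂ᵢ(z)` is a max–min of averages of the indicators `1{yⱼ ≤ z}`, so it depends on `z` only
through the finite set `{j | yⱼ ≤ z}`, and monotonically so. That set is constant on some
interval `[z, z + δ)`, which gives right-continuity. Below all `yⱼ` every average is `0`;
above all `yⱼ` every average over a nonempty set is `1`, and the sets `A ∖ A'` occurring in the
formula are nonempty, so `F̂ᵢ` is `0` near `−∞` and `1` near `+∞`.
-/

open Topology

noncomputable def maxMin (x : Fin n → X) (i : Fin n) (g : Finset (Fin n) → ℝ) : ℝ :=
  (upperSetsContaining x i).sup' (upperSetsContaining_nonempty x i) fun A =>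
    if h : (properUpperSubsets x A).Nonempty then
      (properUpperSubsets x A).inf' h fun A' => g (A \ A')
    else 0

lemma Fhat_eq_maxMin (x : Fin n → X) (y : Fin n → ℝ) (i : Fin n) (z : ℝ) :
    Fhat x y i z = maxMin x i (fun B => indicatorAvg y B z) :=
  rfl

lemma maxMin_mono (x : Fin n → X) (i : Fin n) {g g' : Finset (Fin n) → ℝ}
    (h : ∀ B, g B ≤ g' B) : maxMin x i g ≤ maxMin x i g' := by
  refine Finset.sup'_mono_fun fun A _ => ?_
  split_ifs
  · exact Finset.inf'_mono_fun fun A' _ => h (A \ A')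
  · exact le_rfl

lemma mem_upperSetsContaining {x : Fin n → X} {i : Fin n} {A : Finset (Fin n)} :
    A ∈ upperSetsContaining x i ↔ IsAdmissible x A ∧ i ∈ A := by
  simp only [upperSetsContaining, Finset.mem_filter, Finset.mem_univ, true_and]

lemma mem_properUpperSubsets {x : Fin n → X} {A A' : Finset (Fin n)} :
    A' ∈ properUpperSubsets x A ↔ IsAdmissible x A' ∧ A' ⊂ A := by
  simp only [properUpperSubsets, Finset.mem_filter, Finset.mem_univ, true_and]

lemma empty_mem_properUpperSubsets (x : Fin n → X) {A : Finset (Fin n)} (hA : A.Nonempty) :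
    ∅ ∈ properUpperSubsets x A :=
  mem_properUpperSubsets.2 ⟨by simp [IsAdmissible], Finset.empty_ssubset.2 hA⟩

lemma maxMin_eq_of_forall_nonempty (x : Fin n → X) (i : Fin n) {g : Finset (Fin n) → ℝ} {c : ℝ}
    (h : ∀ B, B.Nonempty → g B = c) : maxMin x i g = c := by
  refine (Finset.sup'_congr _ rfl fun A hA => ?_).trans (Finset.sup'_const _ c)
  have hsub : (properUpperSubsets x A).Nonempty :=
    ⟨∅, empty_mem_properUpperSubsets x ⟨i, (mem_upperSetsContaining.1 hA).2⟩⟩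
  rw [dif_pos hsub, ← Finset.inf'_const hsub c]
  refine Finset.inf'_congr hsub rfl fun A' hA' => h _ ?_
  exact Finset.sdiff_nonempty.2 (mem_properUpperSubsets.1 hA').2.not_superset

lemma indicatorAvg_eq_card_div (y : Fin n → ℝ) (B : Finset (Fin n)) (z : ℝ) :
    indicatorAvg y B z = (B.filter (y · ≤ z)).card / B.card := by
  rw [indicatorAvg, Finset.sum_boole]

lemma indicatorAvg_nonneg (y : Fin n → ℝ) (B : Finset (Fin n)) (z : ℝ) :
    0 ≤ indicatorAvg y B z := by
  rw [indicatorAvg_eq_card_div]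
  positivity

lemma indicatorAvg_le_one (y : Fin n → ℝ) (B : Finset (Fin n)) (z : ℝ) :
    indicatorAvg y B z ≤ 1 := by
  rw [indicatorAvg_eq_card_div]
  exact div_le_one_of_le₀ (by exact_mod_cast Finset.card_filter_le _ _) (Nat.cast_nonneg _)

lemma indicatorAvg_mono (y : Fin n → ℝ) (B : Finset (Fin n)) : Monotone (indicatorAvg y B) := by
  intro z z' hz
  simp only [indicatorAvg_eq_card_div]
  gcongr with j

lemma indicatorAvg_congr (y : Fin n → ℝ) (B : Finset (Fin n)) {z z' : ℝ}
    (h : ∀ j ∈ B, y j ≤ z' ↔ y j ≤ z) : indicatorAvg y B z' = indicatorAvg y B z := by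
  simp only [indicatorAvg]
  rw [Finset.sum_congr rfl fun j hj => if_congr (h j hj) rfl rfl]

lemma indicatorAvg_eq_zero (y : Fin n → ℝ) (B : Finset (Fin n)) {z : ℝ}
    (h : ∀ j ∈ B, z < y j) : indicatorAvg y B z = 0 := by
  rw [indicatorAvg_eq_card_div, Finset.filter_false_of_mem fun j hj => (h j hj).not_ge]
  simp

lemma indicatorAvg_eq_one (y : Fin n → ℝ) {B : Finset (Fin n)} (hB : B.Nonempty) {z : ℝ}
    (h : ∀ j ∈ B, y j ≤ z) : indicatorAvg y B z = 1 := by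
  rw [indicatorAvg_eq_card_div, Finset.filter_true_of_mem h]
  exact div_self (by exact_mod_cast hB.card_pos.ne')

lemma eventually_nhdsGE_forall_le_iff {ι : Type*} [Finite ι] (y : ι → ℝ) (z : ℝ) :
    ∀ᶠ z' in 𝓝[≥] z, ∀ j, y j ≤ z' ↔ y j ≤ z := by
  refine eventually_all.2 fun j => ?_
  rcases le_or_gt (y j) z with hj | hj
  · filter_upwards [self_mem_nhdsWithin] with z' hz' using iff_of_true (hj.trans hz') hj
  · filter_upwards [nhdsWithin_le_nhds (eventually_lt_nhds hj)] with z' hz'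
    using iff_of_false hz'.not_ge hj.not_ge

section Fhat

variable (x : Fin n → X) (y : Fin n → ℝ) (i : Fin n)

lemma Fhat_mono : Monotone (Fhat x y i) := fun _ _ hz => by
  simp only [Fhat_eq_maxMin]
  exact maxMin_mono x i fun B => indicatorAvg_mono y B hz

lemma Fhat_mem_Icc (z : ℝ) : Fhat x y i z ∈ Set.Icc (0 : ℝ) 1 := by
  have h₀ : maxMin x i (fun _ => 0) = 0 := maxMin_eq_of_forall_nonempty x i fun _ _ => rfl
  have h₁ : maxMin x i (fun _ => 1) = 1 := maxMin_eq_of_forall_nonempty x i fun _ _ => rfl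
  rw [Fhat_eq_maxMin]
  exact ⟨h₀ ▸ maxMin_mono x i fun B => indicatorAvg_nonneg y B z,
    h₁ ▸ maxMin_mono x i fun B => indicatorAvg_le_one y B z⟩

lemma Fhat_congr {z z' : ℝ} (h : ∀ j, y j ≤ z' ↔ y j ≤ z) : Fhat x y i z' = Fhat x y i z := by
  simp only [Fhat_eq_maxMin, indicatorAvg_congr y _ fun j _ => h j]

lemma Fhat_eq_zero {z : ℝ} (h : ∀ j, z < y j) : Fhat x y i z = 0 := by
  rw [Fhat_eq_maxMin]
  exact maxMin_eq_of_forall_nonempty x i fun B _ => indicatorAvg_eq_zero y B fun j _ => h j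

lemma Fhat_eq_one {z : ℝ} (h : ∀ j, y j ≤ z) : Fhat x y i z = 1 := by
  rw [Fhat_eq_maxMin]
  exact maxMin_eq_of_forall_nonempty x i fun _ hB => indicatorAvg_eq_one y hB fun j _ => h j

end Fhat

/-- For each `i`, the max–min formula defines a valid cumulative distribution
function: values in `[0,1]`, nondecreasing, right-continuous, with limit `0`
at `−∞` and `1` at `+∞`. -/
theorem Fhat_isCDF (x : Fin n → X) (y : Fin n → ℝ) (i : Fin n) :
    (∀ z : ℝ, Fhat x y i z ∈ Set.Icc (0 : ℝ) 1) ∧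
    Monotone (Fhat x y i) ∧
    (∀ z : ℝ, ContinuousWithinAt (Fhat x y i) (Set.Ici z) z) ∧
    Tendsto (Fhat x y i) atBot (nhds 0) ∧
    Tendsto (Fhat x y i) atTop (nhds 1) := by
  refine ⟨Fhat_mem_Icc x y i, Fhat_mono x y i, fun z => ?_, ?_, ?_⟩
  · refine continuousWithinAt_const.congr_of_eventuallyEq ?_ rfl
    exact (eventually_nhdsGE_forall_le_iff y z).mono fun _ h => Fhat_congr x y i h
  · refine tendsto_const_nhds.congr' ?_
    filter_upwards [eventually_all.2 fun j => eventually_lt_atBot (y j)] with z hz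
    exact (Fhat_eq_zero x y i hz).symm
  · refine tendsto_const_nhds.congr' ?_
    filter_upwards [eventually_all.2 fun j => eventually_ge_atTop (y j)] with z hz
    exact (Fhat_eq_one x y i hz).symm
end
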